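/- Let Q be a groupoid on a topological space X, s a local subgroupoid of Q with atlas U_s = {(U_i, H_i)}, and suppose S is any wide subgroupoid of Q with s ≤ loc(S). Then there exists a refinement W of U_s such that glob(W) ≤ S, where glob(W) is the subgroupoid generated by the members of W. -/

import Mathlib

/-!
Near each point `x`, the chart of `A` through `x` agrees with `s`, and `s` lies below `loc S`,
on some open neighbourhood of `x`. Restricting the chart to that neighbourhood gives a chart
contained in `S`; these restricted charts form a refinement of `A`, and the subgroupoid they
generate lies in `S` because `S` is a subgroupoid.
-/

open CategoryTheory

/-- A wide subgroupoid of the full subgroupoid `Q|U` of a groupoid `Q` on `X`. -/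
structure WideSub (X : Type*) [Groupoid X] (U : Set X) where
  arrows : ∀ x y : X, Set (x ⟶ y)
  src_mem : ∀ {x y : X} {f : x ⟶ y}, f ∈ arrows x y → x ∈ U
  tgt_mem : ∀ {x y : X} {f : x ⟶ y}, f ∈ arrows x y → y ∈ U
  id_mem : ∀ x, x ∈ U → 𝟙 x ∈ arrows x x
  inv_mem : ∀ {x y : X} {f : x ⟶ y}, f ∈ arrows x y → Groupoid.inv f ∈ arrows y x
  comp_mem : ∀ {x y z : X} {f : x ⟶ y} {g : y ⟶ z},
    f ∈ arrows x y → g ∈ arrows y z → f ≫ g ∈ arrows x z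

/-- Inclusion of wide subgroupoids (on the same object set). -/
def WideSub.le {X : Type*} [Groupoid X] {U : Set X} (H K : WideSub X U) : Prop :=
  ∀ x y : X, H.arrows x y ⊆ K.arrows x y

/-- Equality of germs of wide subgroupoids at `x`. -/
def germEquiv {X : Type*} [Groupoid X] [TopologicalSpace X] (x : X)
    (p q : Σ U : Set X, WideSub X U) : Prop :=
  ∃ W : Set X, IsOpen W ∧ x ∈ W ∧ W ⊆ p.1 ∩ q.1 ∧
    ∀ (a b : X) (f : a ⟶ b), a ∈ W → b ∈ W →
      (f ∈ p.2.arrows a b ↔ f ∈ q.2.arrows a b)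

/-- The order on germs of wide subgroupoids at `x`. -/
def germLE {X : Type*} [Groupoid X] [TopologicalSpace X] (x : X)
    (p q : Σ U : Set X, WideSub X U) : Prop :=
  ∃ W : Set X, IsOpen W ∧ x ∈ W ∧ W ⊆ p.1 ∩ q.1 ∧
    ∀ (a b : X) (f : a ⟶ b), a ∈ W → b ∈ W →
      f ∈ p.2.arrows a b → f ∈ q.2.arrows a b

/-- A local subgroupoid of the groupoid `Q` on the space `X`: a global section of the
sheaf of germs of wide subgroupoids, given concretely by a choice, for each `x`, of a
representative `(U x, H x)` with `x ∈ U x`, `U x` open, such that nearby germs agree. -/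
structure LocalSub (X : Type*) [Groupoid X] [TopologicalSpace X] where
  U : X → Set X
  isOpen : ∀ x, IsOpen (U x)
  mem : ∀ x, x ∈ U x
  H : ∀ x, WideSub X (U x)
  compat : ∀ x y, y ∈ U x → germEquiv y ⟨U x, H x⟩ ⟨U y, H y⟩

/-- The pointwise germ order on local subgroupoids. -/
def LocalSub.le {X : Type*} [Groupoid X] [TopologicalSpace X]
    (s t : LocalSub X) : Prop :=
  ∀ x : X, germLE x ⟨s.U x, s.H x⟩ ⟨t.U x, t.H x⟩

/-- `loc H`: the local subgroupoid `x ↦ [X, H]_x` of a wide subgroupoid `H` of `Q`. -/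
def loc {X : Type*} [Groupoid X] [TopologicalSpace X]
    (H : WideSub X (Set.univ : Set X)) : LocalSub X where
  U _ := Set.univ
  isOpen _ := isOpen_univ
  mem _ := Set.mem_univ _
  H _ := H
  compat _ y _ := ⟨Set.univ, isOpen_univ, Set.mem_univ y,
    fun z _ => ⟨Set.mem_univ z, Set.mem_univ z⟩, fun _ _ _ _ _ => Iff.rfl⟩

/-- `glob s`: the intersection of all wide subgroupoids `K` of `Q` with `s ≤ loc K`. -/
def globSub {X : Type*} [Groupoid X] [TopologicalSpace X]
    (s : LocalSub X) : WideSub X (Set.univ : Set X) where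
  arrows x y := {f | ∀ K : WideSub X (Set.univ : Set X), s.le (loc K) → f ∈ K.arrows x y}
  src_mem _ := Set.mem_univ _
  tgt_mem _ := Set.mem_univ _
  id_mem x _ := fun K _ => K.id_mem x (Set.mem_univ x)
  inv_mem h := fun K hK => K.inv_mem (h K hK)
  comp_mem hf hg := fun K hK => K.comp_mem (hf K hK) (hg K hK)

/-- An atlas `{(U i, H i) : i ∈ ι}` for a local subgroupoid `s`: an open cover together
with wide subgroupoids `H i` of `Q|U i` representing the germs of `s`. -/
structure Atlas {X : Type*} [Groupoid X] [TopologicalSpace X]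
    (s : LocalSub X) (ι : Type*) where
  U : ι → Set X
  isOpen : ∀ i, IsOpen (U i)
  cover : ∀ x : X, ∃ i, x ∈ U i
  H : ∀ i, WideSub X (U i)
  germ : ∀ (i : ι) (x : X), x ∈ U i → germEquiv x ⟨U i, H i⟩ ⟨s.U x, s.H x⟩

/-- The subgroupoid of `Q` generated by the members of an atlas. -/
def globAtlas {X : Type*} [Groupoid X] [TopologicalSpace X]
    {s : LocalSub X} {ι : Type*} (A : Atlas s ι) : WideSub X (Set.univ : Set X) where
  arrows x y := {f | ∀ K : WideSub X (Set.univ : Set X),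
      (∀ (i : ι) (a b : X) (g : a ⟶ b), g ∈ (A.H i).arrows a b → g ∈ K.arrows a b) →
      f ∈ K.arrows x y}
  src_mem _ := Set.mem_univ _
  tgt_mem _ := Set.mem_univ _
  id_mem x _ := fun K hK =>
    Exists.elim (A.cover x) fun i hi => hK i x x (𝟙 x) ((A.H i).id_mem x hi)
  inv_mem h := fun K hK => K.inv_mem (h K hK)
  comp_mem hf hg := fun K hK => K.comp_mem (hf K hK) (hg K hK)

/-- `B` refines `A`: every chart `(V j, K j)` of `B` is of the form
`(V j, H (i j) | V j)` for some chart of `A` with `V j ⊆ U (i j)`. -/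
def Refines {X : Type*} [Groupoid X] [TopologicalSpace X] {s : LocalSub X}
    {ι κ : Type*} (B : Atlas s κ) (A : Atlas s ι) : Prop :=
  ∀ j : κ, ∃ i : ι, B.U j ⊆ A.U i ∧
    ∀ (a b : X) (f : a ⟶ b),
      (f ∈ (B.H j).arrows a b ↔ f ∈ (A.H i).arrows a b ∧ a ∈ B.U j ∧ b ∈ B.U j)

def WideSub.restrict {X : Type*} [Groupoid X] {U : Set X} (H : WideSub X U)
    (V : Set X) (hV : V ⊆ U) : WideSub X V where
  arrows a b := {f | f ∈ H.arrows a b ∧ a ∈ V ∧ b ∈ V}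
  src_mem h := h.2.1
  tgt_mem h := h.2.2
  id_mem x hx := ⟨H.id_mem x (hV hx), hx, hx⟩
  inv_mem h := ⟨H.inv_mem h.1, h.2.2, h.2.1⟩
  comp_mem hf hg := ⟨H.comp_mem hf.1 hg.1, hf.2.1, hg.2.2⟩

section Topological

variable {X : Type*} [Groupoid X] [TopologicalSpace X]

theorem germEquiv.trans_germLE {x : X} {p q r : Σ U : Set X, WideSub X U}
    (hpq : germEquiv x p q) (hqr : germLE x q r) : germLE x p r := by
  obtain ⟨W, hWo, hxW, hWpq, hW⟩ := hpq
  obtain ⟨W', hW'o, hxW', hW'qr, hW'⟩ := hqr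
  exact ⟨W ∩ W', hWo.inter hW'o, ⟨hxW, hxW'⟩, fun z hz => ⟨(hWpq hz.1).1, (hW'qr hz.2).2⟩,
    fun a b f ha hb hf => hW' a b f ha.2 hb.2 ((hW a b f ha.1 hb.1).1 hf)⟩

theorem germEquiv.restrict {y : X} {U V : Set X} {H : WideSub X U}
    {p : Σ U : Set X, WideSub X U} (h : germEquiv y ⟨U, H⟩ p) (hVo : IsOpen V) (hyV : y ∈ V)
    (hVU : V ⊆ U) : germEquiv y ⟨V, H.restrict V hVU⟩ p := by
  obtain ⟨W, hWo, hyW, hWUp, hW⟩ := h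
  exact ⟨W ∩ V, hWo.inter hVo, ⟨hyW, hyV⟩, fun z hz => ⟨hz.2, (hWUp hz.1).2⟩,
    fun a b f ha hb => ⟨fun hf => (hW a b f ha.1 hb.1).1 hf.1,
      fun hf => ⟨(hW a b f ha.1 hb.1).2 hf, ha.2, hb.2⟩⟩⟩

variable {s : LocalSub X} {ι κ : Type*}

def Atlas.shrink (A : Atlas s ι) (i : κ → ι) (V : κ → Set X) (hVo : ∀ j, IsOpen (V j))
    (hVU : ∀ j, V j ⊆ A.U (i j)) (hcover : ∀ x, ∃ j, x ∈ V j) : Atlas s κ where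
  U := V
  isOpen := hVo
  cover := hcover
  H j := (A.H (i j)).restrict (V j) (hVU j)
  germ j y hy := (A.germ (i j) y (hVU j hy)).restrict (hVo j) hy (hVU j)

theorem Atlas.shrink_refines (A : Atlas s ι) (i : κ → ι) (V : κ → Set X)
    (hVo : ∀ j, IsOpen (V j)) (hVU : ∀ j, V j ⊆ A.U (i j)) (hcover : ∀ x, ∃ j, x ∈ V j) :
    Refines (A.shrink i V hVo hVU hcover) A :=
  fun j => ⟨i j, hVU j, fun _ _ _ => Iff.rfl⟩

theorem globAtlas_le_of_forall_le (A : Atlas s ι) (K : WideSub X (Set.univ : Set X))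
    (hK : ∀ (i : ι) (a b : X) (g : a ⟶ b), g ∈ (A.H i).arrows a b → g ∈ K.arrows a b) :
    (globAtlas A).le K :=
  fun _ _ _ hf => hf K hK

end Topological

theorem exists_refinement_globAtlas_le {X : Type} [Groupoid X] [TopologicalSpace X]
    (s : LocalSub X) {ι : Type} (A : Atlas s ι)
    (S : WideSub X (Set.univ : Set X)) (hS : s.le (loc S)) :
    ∃ (κ : Type) (B : Atlas s κ), Refines B A ∧ (globAtlas B).le S := by
  choose i hi using A.cover
  have hchart_le : ∀ x, germLE x ⟨A.U (i x), A.H (i x)⟩ ⟨Set.univ, S⟩ :=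
    fun x => (A.germ (i x) x (hi x)).trans_germLE (hS x)
  choose W hWo hxW hWU hWS using hchart_le
  have hWA : ∀ x, W x ⊆ A.U (i x) := fun x _ hy => (hWU x hy).1
  exact ⟨X, A.shrink i W hWo hWA (fun x => ⟨x, hxW x⟩), A.shrink_refines i W hWo hWA _,
    globAtlas_le_of_forall_le _ S fun x a b f hf => hWS x a b f hf.2.1 hf.2.2 hf.1⟩
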